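/- Let x₀, y₀ ∈ ℝ, let g : [x₀,∞) × [y₀,∞) → ℝ and K : [x₀,∞) × [y₀,∞) × [x₀,∞) × [y₀,∞) × ℝ → ℝ be continuous, and let q, r : [x₀,∞) × [y₀,∞) → [0,∞) be continuous such that |K(x,y,η,τ,u) − K(x,y,η,τ,v)| ≤ q(x,y) r(η,τ) |u − v| for all arguments and all u, v ∈ ℝ. Let ε₁, ε₂ ≥ 0 and let u₁, u₂ : [x₀,∞) × [y₀,∞) → ℝ be continuous functions such that, for i = 1, 2 and all x ≥ x₀, y ≥ y₀, |u_i(x,y) − ( g(x,y) + ∫_{x₀}^{x} ∫_{x₀}^{s} ∫_{y₀}^{y} K(x,y,η,τ,u_i(η,τ)) dτ dη ds )| ≤ ε_i. Then for all x ≥ x₀ and y ≥ y₀, |u₁(x,y) − u₂(x,y)| ≤ (ε₁ + ε₂) · [ 1 + q(x,y) · ( ∫_{x₀}^{x} ∫_{x₀}^{s} ∫_{y₀}^{y} r(η,τ) dτ dη ds ) · exp( ∫_{x₀}^{x} ∫_{x₀}^{s} ∫_{y₀}^{y} r(η,τ) q(η,τ) dτ dη ds ) ]. -/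

import Mathlib

/-!
Write `T f (x, y) = ∫_{x₀}^{x} ∫_{x₀}^{s} ∫_{y₀}^{y} f(η, τ) dτ dη ds`. Subtracting the two
approximate equations and using the Lipschitz bound on `K`, `w = |u₁ - u₂|` satisfies
`w ≤ ε + q · T (r w)` with `ε = ε₁ + ε₂`. Fix `y`. Since `T (r w)` grows with its `y`-limit,
`A(x) = T (r w) (x, y)` bounds the integral at every `(η, τ)` with `η ≤ x`, `τ ≤ y`, and
integrating `r w ≤ ε r + r q A` gives the linear differential inequality
`A'(x) ≤ ε ∫_{x₀}^{x} ∫_{y₀}^{y} r + (∫_{x₀}^{x} ∫_{y₀}^{y} r q) A(x)`, `A(x₀) = 0`.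
The integrating factor `exp (-T (r q))` turns it into `A ≤ ε T r · exp (T (r q))`, and
`w ≤ ε + q A` is the claim. Data continuous only on the quadrant are extended to the plane by
clamping their arguments to it, which changes none of the integrals.
-/

open Set Function Real intervalIntegral

noncomputable section

def rectIntegral (x₀ y₀ : ℝ) (f : ℝ → ℝ → ℝ) (x y : ℝ) : ℝ :=
  ∫ η in x₀..x, ∫ τ in y₀..y, f η τ

def tripleIntegral (x₀ y₀ : ℝ) (f : ℝ → ℝ → ℝ) (x y : ℝ) : ℝ :=
  ∫ s in x₀..x, rectIntegral x₀ y₀ f s y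

end

section IteratedIntegrals

variable {x₀ y₀ x y : ℝ} {f g : ℝ → ℝ → ℝ}

lemma intervalIntegrable_innerIntegral (hf : Continuous ↿f) (c d a b : ℝ) :
    IntervalIntegrable (fun η => ∫ τ in c..d, f η τ) MeasureTheory.volume a b :=
  (continuous_parametric_intervalIntegral_of_continuous' hf c d).intervalIntegrable a b

lemma continuous_rectIntegral (hf : Continuous ↿f) (y : ℝ) :
    Continuous fun x => rectIntegral x₀ y₀ f x y :=
  continuous_primitive
    (fun _ _ => intervalIntegrable_innerIntegral hf _ _ _ _) x₀

lemma hasDerivAt_tripleIntegral (hf : Continuous ↿f) (x y : ℝ) :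
    HasDerivAt (fun x => tripleIntegral x₀ y₀ f x y) (rectIntegral x₀ y₀ f x y) x :=
  ((continuous_rectIntegral hf y).integral_hasStrictDerivAt x₀ x).hasDerivAt

lemma tripleIntegral_congr (hx : x₀ ≤ x) (hy : y₀ ≤ y)
    (h : ∀ η ∈ Icc x₀ x, ∀ τ ∈ Icc y₀ y, f η τ = g η τ) :
    tripleIntegral x₀ y₀ f x y = tripleIntegral x₀ y₀ g x y := by
  refine integral_congr fun s hs => ?_
  rw [uIcc_of_le hx] at hs
  refine integral_congr fun η hη => ?_
  rw [uIcc_of_le hs.1] at hη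
  refine integral_congr fun τ hτ => ?_
  rw [uIcc_of_le hy] at hτ
  exact h η ⟨hη.1, hη.2.trans hs.2⟩ τ hτ

lemma rectIntegral_nonneg (hx : x₀ ≤ x) (hy : y₀ ≤ y)
    (hf : ∀ η ∈ Icc x₀ x, ∀ τ ∈ Icc y₀ y, 0 ≤ f η τ) : 0 ≤ rectIntegral x₀ y₀ f x y :=
  integral_nonneg hx fun η hη =>
    integral_nonneg hy fun τ hτ => hf η hη τ hτ

lemma tripleIntegral_nonneg (hx : x₀ ≤ x) (hy : y₀ ≤ y)
    (hf : ∀ η ∈ Icc x₀ x, ∀ τ ∈ Icc y₀ y, 0 ≤ f η τ) : 0 ≤ tripleIntegral x₀ y₀ f x y :=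
  integral_nonneg hx fun _ hs =>
    rectIntegral_nonneg hs.1 hy fun η hη => hf η ⟨hη.1, hη.2.trans hs.2⟩

lemma rectIntegral_mono (hf : Continuous ↿f) (hg : Continuous ↿g) (hx : x₀ ≤ x) (hy : y₀ ≤ y)
    (h : ∀ η ∈ Icc x₀ x, ∀ τ ∈ Icc y₀ y, f η τ ≤ g η τ) :
    rectIntegral x₀ y₀ f x y ≤ rectIntegral x₀ y₀ g x y :=
  integral_mono_on hx
    (intervalIntegrable_innerIntegral hf _ _ _ _)
    (intervalIntegrable_innerIntegral hg _ _ _ _) fun η hη =>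
    integral_mono_on hy ((hf.uncurry_left η).intervalIntegrable _ _)
      ((hg.uncurry_left η).intervalIntegrable _ _) (h η hη)

lemma tripleIntegral_mono (hf : Continuous ↿f) (hg : Continuous ↿g) (hx : x₀ ≤ x)
    (hy : y₀ ≤ y) (h : ∀ η ∈ Icc x₀ x, ∀ τ ∈ Icc y₀ y, f η τ ≤ g η τ) :
    tripleIntegral x₀ y₀ f x y ≤ tripleIntegral x₀ y₀ g x y :=
  integral_mono_on hx ((continuous_rectIntegral hf y).intervalIntegrable _ _)
    ((continuous_rectIntegral hg y).intervalIntegrable _ _) fun _ hs =>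
    rectIntegral_mono hf hg hs.1 hy fun η hη => h η ⟨hη.1, hη.2.trans hs.2⟩

lemma rectIntegral_add (hf : Continuous ↿f) (hg : Continuous ↿g) (x y : ℝ) :
    rectIntegral x₀ y₀ (fun η τ => f η τ + g η τ) x y =
      rectIntegral x₀ y₀ f x y + rectIntegral x₀ y₀ g x y := by
  rw [rectIntegral, rectIntegral, rectIntegral, ← integral_add
    (intervalIntegrable_innerIntegral hf _ _ _ _)
    (intervalIntegrable_innerIntegral hg _ _ _ _)]
  exact integral_congr fun η _ => integral_add
    ((hf.uncurry_left η).intervalIntegrable _ _) ((hg.uncurry_left η).intervalIntegrable _ _)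

lemma tripleIntegral_add (hf : Continuous ↿f) (hg : Continuous ↿g) (x y : ℝ) :
    tripleIntegral x₀ y₀ (fun η τ => f η τ + g η τ) x y =
      tripleIntegral x₀ y₀ f x y + tripleIntegral x₀ y₀ g x y := by
  rw [tripleIntegral, tripleIntegral, tripleIntegral, ← integral_add
    ((continuous_rectIntegral hf y).intervalIntegrable _ _)
    ((continuous_rectIntegral hg y).intervalIntegrable _ _)]
  exact integral_congr fun s _ => rectIntegral_add hf hg s y

lemma rectIntegral_const_mul (c : ℝ) (x y : ℝ) :
    rectIntegral x₀ y₀ (fun η τ => c * f η τ) x y = c * rectIntegral x₀ y₀ f x y := by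
  simp only [rectIntegral, integral_const_mul]

lemma tripleIntegral_const_mul (c : ℝ) (x y : ℝ) :
    tripleIntegral x₀ y₀ (fun η τ => c * f η τ) x y = c * tripleIntegral x₀ y₀ f x y := by
  simp only [tripleIntegral, rectIntegral_const_mul, integral_const_mul]

lemma abs_tripleIntegral_sub_le {h : ℝ → ℝ → ℝ} (hf : Continuous ↿f) (hg : Continuous ↿g)
    (hh : Continuous ↿h) (hx : x₀ ≤ x) (hy : y₀ ≤ y)
    (hfg : ∀ η ∈ Icc x₀ x, ∀ τ ∈ Icc y₀ y, |f η τ - g η τ| ≤ h η τ) :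
    |tripleIntegral x₀ y₀ f x y - tripleIntegral x₀ y₀ g x y| ≤ tripleIntegral x₀ y₀ h x y := by
  have hf_le := tripleIntegral_mono hf (hg.add hh) hx hy fun η hη τ hτ =>
    (sub_le_iff_le_add'.1 (abs_le.1 (hfg η hη τ hτ)).2)
  have hg_le := tripleIntegral_mono hg (hf.add hh) hx hy fun η hη τ hτ =>
    (sub_le_iff_le_add'.1
      (abs_le.1 ((abs_sub_comm (g η τ) (f η τ)).trans_le (hfg η hη τ hτ))).2)
  rw [tripleIntegral_add hg hh] at hf_le
  rw [tripleIntegral_add hf hh] at hg_le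
  exact abs_sub_le_iff.2 ⟨by linarith, by linarith⟩

lemma monotoneOn_tripleIntegral_left (hf : Continuous ↿f) (hy : y₀ ≤ y)
    (hf₀ : ∀ η τ, x₀ ≤ η → y₀ ≤ τ → 0 ≤ f η τ) :
    MonotoneOn (fun x => tripleIntegral x₀ y₀ f x y) (Ici x₀) := by
  refine monotoneOn_of_deriv_nonneg (convex_Ici x₀)
    (fun x _ => (hasDerivAt_tripleIntegral hf x y).continuousAt.continuousWithinAt)
    (fun x _ => (hasDerivAt_tripleIntegral hf x y).differentiableAt.differentiableWithinAt)
    fun x hx => ?_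
  rw [interior_Ici] at hx
  rw [(hasDerivAt_tripleIntegral hf x y).deriv]
  exact rectIntegral_nonneg (le_of_lt hx) hy fun η hη τ hτ => hf₀ η τ hη.1 hτ.1

lemma monotoneOn_tripleIntegral_right (hf : Continuous ↿f) (hx : x₀ ≤ x)
    (hf₀ : ∀ η τ, x₀ ≤ η → y₀ ≤ τ → 0 ≤ f η τ) :
    MonotoneOn (tripleIntegral x₀ y₀ f x) (Ici y₀) := by
  intro b hb y _ hby
  refine integral_mono_on hx
    ((continuous_rectIntegral hf b).intervalIntegrable _ _)
    ((continuous_rectIntegral hf y).intervalIntegrable _ _) fun s hs => ?_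
  refine integral_mono_on hs.1
    (intervalIntegrable_innerIntegral hf _ _ _ _)
    (intervalIntegrable_innerIntegral hf _ _ _ _) fun η hη => ?_
  exact integral_mono_interval le_rfl hb hby
    ((MeasureTheory.ae_restrict_mem measurableSet_Ioc).mono fun τ hτ =>
      hf₀ η τ hη.1 (le_of_lt hτ.1))
    ((hf.uncurry_left η).intervalIntegrable _ _)

end IteratedIntegrals

theorem le_mul_exp_of_hasDerivAt_le_add_mul {A A' B b E m : ℝ → ℝ} {x₀ x : ℝ}
    (hA : ∀ t, HasDerivAt A (A' t) t) (hB : ∀ t, HasDerivAt B (b t) t)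
    (hE : ∀ t, HasDerivAt E (m t) t) (hA₀ : A x₀ = 0) (hB₀ : B x₀ = 0)
    (hb : ∀ t, x₀ ≤ t → 0 ≤ b t) (hE₀ : ∀ t, x₀ ≤ t → 0 ≤ E t)
    (h : ∀ t, x₀ ≤ t → A' t ≤ b t + m t * A t) (hx : x₀ ≤ x) :
    A x ≤ B x * exp (E x) := by
  have hφ : ∀ s, HasDerivAt (fun s => B s - A s * exp (-E s))
      (b s - (A' s - m s * A s) * exp (-E s)) s := fun s =>
    ((hB s).sub ((hA s).mul (hE s).neg.exp)).congr_deriv (by simp only [Pi.neg_apply]; ring)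
  have hφ_mono : MonotoneOn (fun s => B s - A s * exp (-E s)) (Ici x₀) := by
    refine monotoneOn_of_deriv_nonneg (convex_Ici x₀)
      (fun s _ => (hφ s).continuousAt.continuousWithinAt)
      (fun s _ => (hφ s).differentiableAt.differentiableWithinAt) fun s hs => ?_
    rw [interior_Ici] at hs
    rw [(hφ s).deriv, sub_nonneg]
    calc (A' s - m s * A s) * exp (-E s) ≤ b s * exp (-E s) :=
          mul_le_mul_of_nonneg_right (by linarith [h s hs.le]) (exp_pos _).le
      _ ≤ b s := mul_le_of_le_one_right (hb s hs.le)
          (exp_le_one_iff.2 (neg_nonpos.2 (hE₀ s hs.le)))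
  have hφ_x := hφ_mono self_mem_Ici hx hx
  simp only [hA₀, hB₀, zero_mul, sub_zero, sub_nonneg] at hφ_x
  calc A x = A x * exp (-E x) * exp (E x) := by rw [mul_assoc, ← exp_add]; simp
    _ ≤ B x * exp (E x) := by gcongr

section Quadrant

variable {x₀ y₀ : ℝ}

theorem le_mul_exp_of_le_add_mul_tripleIntegral {q r w : ℝ → ℝ → ℝ} {ε : ℝ}
    (hq : Continuous ↿q) (hr : Continuous ↿r) (hw : Continuous ↿w)
    (hq₀ : ∀ a b, 0 ≤ q a b) (hr₀ : ∀ a b, 0 ≤ r a b) (hw₀ : ∀ a b, 0 ≤ w a b)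
    (h : ∀ a b, x₀ ≤ a → y₀ ≤ b →
      w a b ≤ ε + q a b * tripleIntegral x₀ y₀ (fun η τ => r η τ * w η τ) a b)
    {x y : ℝ} (hx : x₀ ≤ x) (hy : y₀ ≤ y) :
    w x y ≤ ε * (1 + q x y * tripleIntegral x₀ y₀ r x y *
      exp (tripleIntegral x₀ y₀ (fun η τ => r η τ * q η τ) x y)) := by
  have hrw : Continuous ↿(fun η τ => r η τ * w η τ) := hr.mul hw
  have hrq : Continuous ↿(fun η τ => r η τ * q η τ) := hr.mul hq
  have hrw₀ : ∀ η τ, x₀ ≤ η → y₀ ≤ τ → 0 ≤ r η τ * w η τ :=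
    fun η τ _ _ => mul_nonneg (hr₀ η τ) (hw₀ η τ)
  -- at `a = x₀` the triple integral vanishes
  have hε : 0 ≤ ε := by
    simpa [tripleIntegral] using (hw₀ x₀ y₀).trans (h x₀ y₀ le_rfl le_rfl)
  set A := fun t => tripleIntegral x₀ y₀ (fun η τ => r η τ * w η τ) t y
  have hA_mono : MonotoneOn A (Ici x₀) := monotoneOn_tripleIntegral_left hrw hy hrw₀
  -- the triple integral grows with its upper limit in `y`, so `y` can be frozen
  have hw_le : ∀ a b, x₀ ≤ a → b ∈ Icc y₀ y → w a b ≤ ε + q a b * A a := fun a b ha hb =>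
    (h a b ha hb.1).trans (add_le_add le_rfl (mul_le_mul_of_nonneg_left
      (monotoneOn_tripleIntegral_right hrw ha hrw₀ hb.1 hy hb.2) (hq₀ a b)))
  have hA' : ∀ t, x₀ ≤ t → rectIntegral x₀ y₀ (fun η τ => r η τ * w η τ) t y ≤
      ε * rectIntegral x₀ y₀ r t y +
        rectIntegral x₀ y₀ (fun η τ => r η τ * q η τ) t y * A t := by
    intro t ht
    calc _ ≤ rectIntegral x₀ y₀ (fun η τ => ε * r η τ + A t * (r η τ * q η τ)) t y := by
          refine rectIntegral_mono hrw ((continuous_const.mul hr).add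
            (continuous_const.mul hrq)) ht hy fun η hη τ hτ => ?_
          calc r η τ * w η τ ≤ r η τ * (ε + q η τ * A t) :=
                mul_le_mul_of_nonneg_left ((hw_le η τ hη.1 hτ).trans (add_le_add le_rfl
                  (mul_le_mul_of_nonneg_left (hA_mono hη.1 (hη.1.trans hη.2) hη.2) (hq₀ η τ))))
                  (hr₀ η τ)
            _ = ε * r η τ + A t * (r η τ * q η τ) := by ring
      _ = _ := by
          rw [rectIntegral_add (continuous_const.mul hr) (continuous_const.mul hrq),
            rectIntegral_const_mul, rectIntegral_const_mul, mul_comm (A t)]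
  have hA_le : A x ≤ ε * tripleIntegral x₀ y₀ r x y *
      exp (tripleIntegral x₀ y₀ (fun η τ => r η τ * q η τ) x y) :=
    le_mul_exp_of_hasDerivAt_le_add_mul (fun t => hasDerivAt_tripleIntegral hrw t y)
      (fun t => (hasDerivAt_tripleIntegral hr t y).const_mul ε)
      (fun t => hasDerivAt_tripleIntegral hrq t y) (by simp [tripleIntegral])
      (by simp [tripleIntegral])
      (fun t ht => mul_nonneg hε (rectIntegral_nonneg ht hy fun η _ τ _ => hr₀ η τ))
      (fun t ht => tripleIntegral_nonneg ht hy fun η _ τ _ => mul_nonneg (hr₀ η τ) (hq₀ η τ))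
      hA' hx
  calc w x y ≤ ε + q x y * A x := hw_le x y hx ⟨hy, le_rfl⟩
    _ ≤ ε + q x y * (ε * tripleIntegral x₀ y₀ r x y *
          exp (tripleIntegral x₀ y₀ (fun η τ => r η τ * q η τ) x y)) :=
      add_le_add le_rfl (mul_le_mul_of_nonneg_left hA_le (hq₀ x y))
    _ = _ := by ring

def quadrantExtend (x₀ y₀ : ℝ) (f : ℝ → ℝ → ℝ) (a b : ℝ) : ℝ :=
  f (max a x₀) (max b y₀)

lemma quadrantExtend_of_le {f : ℝ → ℝ → ℝ} {a b : ℝ} (ha : x₀ ≤ a) (hb : y₀ ≤ b) :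
    quadrantExtend x₀ y₀ f a b = f a b := by
  rw [quadrantExtend, max_eq_left ha, max_eq_left hb]

lemma continuous_quadrantExtend {f : ℝ → ℝ → ℝ} (hf : ContinuousOn ↿f (Ici x₀ ×ˢ Ici y₀)) :
    Continuous ↿(quadrantExtend x₀ y₀ f) :=
  hf.comp_continuous (f := fun z : ℝ × ℝ => (max z.1 x₀, max z.2 y₀)) (by fun_prop)
    fun _ => ⟨mem_Ici.2 (le_max_right _ _), mem_Ici.2 (le_max_right _ _)⟩

theorem le_mul_exp_of_le_add_mul_tripleIntegral_of_continuousOn {q r w : ℝ → ℝ → ℝ} {ε : ℝ}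
    (hq : ContinuousOn ↿q (Ici x₀ ×ˢ Ici y₀)) (hr : ContinuousOn ↿r (Ici x₀ ×ˢ Ici y₀))
    (hw : ContinuousOn ↿w (Ici x₀ ×ˢ Ici y₀))
    (hq₀ : ∀ a b, x₀ ≤ a → y₀ ≤ b → 0 ≤ q a b) (hr₀ : ∀ a b, x₀ ≤ a → y₀ ≤ b → 0 ≤ r a b)
    (hw₀ : ∀ a b, x₀ ≤ a → y₀ ≤ b → 0 ≤ w a b)
    (h : ∀ a b, x₀ ≤ a → y₀ ≤ b →
      w a b ≤ ε + q a b * tripleIntegral x₀ y₀ (fun η τ => r η τ * w η τ) a b)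
    {x y : ℝ} (hx : x₀ ≤ x) (hy : y₀ ≤ y) :
    w x y ≤ ε * (1 + q x y * tripleIntegral x₀ y₀ r x y *
      exp (tripleIntegral x₀ y₀ (fun η τ => r η τ * q η τ) x y)) := by
  have hext : ∀ {f : ℝ → ℝ → ℝ}, (∀ a b, x₀ ≤ a → y₀ ≤ b → 0 ≤ f a b) →
      ∀ a b, 0 ≤ quadrantExtend x₀ y₀ f a b :=
    fun hf _ _ => hf _ _ (le_max_right _ _) (le_max_right _ _)
  have hT : ∀ {f g : ℝ → ℝ → ℝ} {a b : ℝ}, x₀ ≤ a → y₀ ≤ b →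
      tripleIntegral x₀ y₀
          (fun η τ => quadrantExtend x₀ y₀ f η τ * quadrantExtend x₀ y₀ g η τ) a b =
        tripleIntegral x₀ y₀ (fun η τ => f η τ * g η τ) a b :=
    fun ha hb => tripleIntegral_congr ha hb fun _ hη _ hτ => by
      rw [quadrantExtend_of_le hη.1 hτ.1, quadrantExtend_of_le hη.1 hτ.1]
  have key := le_mul_exp_of_le_add_mul_tripleIntegral (continuous_quadrantExtend hq)
    (continuous_quadrantExtend hr) (continuous_quadrantExtend hw) (hext hq₀) (hext hr₀)
    (hext hw₀) (fun a b ha hb => by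
      rw [hT ha hb, quadrantExtend_of_le ha hb, quadrantExtend_of_le ha hb]
      exact h a b ha hb) hx hy
  have hTr : tripleIntegral x₀ y₀ (quadrantExtend x₀ y₀ r) x y = tripleIntegral x₀ y₀ r x y :=
    tripleIntegral_congr hx hy fun _ hη _ hτ => quadrantExtend_of_le hη.1 hτ.1
  rwa [hT hx hy, hTr, quadrantExtend_of_le hx hy, quadrantExtend_of_le hx hy] at key

theorem abs_tripleIntegral_sub_le_of_lipschitz {k : ℝ → ℝ → ℝ → ℝ} {c : ℝ}
    {r u₁ u₂ : ℝ → ℝ → ℝ}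
    (hk : ContinuousOn (fun z : ℝ × ℝ × ℝ => k z.1 z.2.1 z.2.2) (Ici x₀ ×ˢ Ici y₀ ×ˢ univ))
    (hr : ContinuousOn ↿r (Ici x₀ ×ˢ Ici y₀)) (hu₁ : ContinuousOn ↿u₁ (Ici x₀ ×ˢ Ici y₀))
    (hu₂ : ContinuousOn ↿u₂ (Ici x₀ ×ˢ Ici y₀))
    (hk_lip : ∀ η τ, x₀ ≤ η → y₀ ≤ τ → ∀ a b, |k η τ a - k η τ b| ≤ c * r η τ * |a - b|)
    {x y : ℝ} (hx : x₀ ≤ x) (hy : y₀ ≤ y) :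
    |tripleIntegral x₀ y₀ (fun η τ => k η τ (u₁ η τ)) x y -
        tripleIntegral x₀ y₀ (fun η τ => k η τ (u₂ η τ)) x y| ≤
      c * tripleIntegral x₀ y₀ (fun η τ => r η τ * |u₁ η τ - u₂ η τ|) x y := by
  set ū₁ := quadrantExtend x₀ y₀ u₁
  set ū₂ := quadrantExtend x₀ y₀ u₂
  have hk_ext : ∀ {u : ℝ → ℝ → ℝ}, Continuous ↿u →
      Continuous ↿(fun η τ => k (max η x₀) (max τ y₀) (u η τ)) := fun {u} hu =>
    hk.comp_continuous (f := fun z : ℝ × ℝ => (max z.1 x₀, max z.2 y₀, u z.1 z.2))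
      ((continuous_fst.max continuous_const).prodMk
        ((continuous_snd.max continuous_const).prodMk hu))
      fun _ => ⟨mem_Ici.2 (le_max_right _ _), mem_Ici.2 (le_max_right _ _), mem_univ _⟩
  have hT : ∀ {u : ℝ → ℝ → ℝ}, tripleIntegral x₀ y₀ (fun η τ => k η τ (u η τ)) x y =
      tripleIntegral x₀ y₀
        (fun η τ => k (max η x₀) (max τ y₀) (quadrantExtend x₀ y₀ u η τ)) x y :=
    tripleIntegral_congr hx hy fun η hη τ hτ => by
      rw [quadrantExtend_of_le hη.1 hτ.1, max_eq_left hη.1, max_eq_left hτ.1]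
  rw [hT, hT, ← tripleIntegral_const_mul]
  calc _ ≤ tripleIntegral x₀ y₀
        (fun η τ => c * (quadrantExtend x₀ y₀ r η τ * |ū₁ η τ - ū₂ η τ|)) x y :=
        abs_tripleIntegral_sub_le (hk_ext (continuous_quadrantExtend hu₁))
          (hk_ext (continuous_quadrantExtend hu₂)) (continuous_const.mul
            ((continuous_quadrantExtend hr).mul
              ((continuous_quadrantExtend hu₁).sub (continuous_quadrantExtend hu₂)).abs))
          hx hy fun η _ τ _ => (hk_lip _ _ (le_max_right _ _) (le_max_right _ _) _ _).trans_eq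
            (mul_assoc _ _ _)
    _ = _ := tripleIntegral_congr hx hy fun η hη τ hτ => by
        simp only [ū₁, ū₂, quadrantExtend_of_le hη.1 hτ.1]

end Quadrant

theorem stmt_10_general (x₀ y₀ : ℝ) (g : ℝ → ℝ → ℝ) (K : ℝ → ℝ → ℝ → ℝ → ℝ → ℝ)
    (q r : ℝ → ℝ → ℝ) (ε₁ ε₂ : ℝ) (u₁ u₂ : ℝ → ℝ → ℝ)
    (hK_cont : ContinuousOn
      (fun z : ℝ × ℝ × ℝ × ℝ × ℝ => K z.1 z.2.1 z.2.2.1 z.2.2.2.1 z.2.2.2.2)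
      (Set.Ici x₀ ×ˢ Set.Ici y₀ ×ˢ Set.Ici x₀ ×ˢ Set.Ici y₀ ×ˢ (Set.univ : Set ℝ)))
    (hq_cont : ContinuousOn (fun z : ℝ × ℝ => q z.1 z.2) (Set.Ici x₀ ×ˢ Set.Ici y₀))
    (hr_cont : ContinuousOn (fun z : ℝ × ℝ => r z.1 z.2) (Set.Ici x₀ ×ˢ Set.Ici y₀))
    (hq_nonneg : ∀ x y, x₀ ≤ x → y₀ ≤ y → 0 ≤ q x y)
    (hr_nonneg : ∀ x y, x₀ ≤ x → y₀ ≤ y → 0 ≤ r x y)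
    (hK_lip : ∀ x y η τ, x₀ ≤ x → y₀ ≤ y → x₀ ≤ η → y₀ ≤ τ → ∀ a b : ℝ,
      |K x y η τ a - K x y η τ b| ≤ q x y * r η τ * |a - b|)
    (hu₁_cont : ContinuousOn (fun z : ℝ × ℝ => u₁ z.1 z.2) (Set.Ici x₀ ×ˢ Set.Ici y₀))
    (hu₂_cont : ContinuousOn (fun z : ℝ × ℝ => u₂ z.1 z.2) (Set.Ici x₀ ×ˢ Set.Ici y₀))
    (hu₁_approx : ∀ x y, x₀ ≤ x → y₀ ≤ y →
      |u₁ x y - (g x y + ∫ s in x₀..x, ∫ η in x₀..s, ∫ τ in y₀..y,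
        K x y η τ (u₁ η τ))| ≤ ε₁)
    (hu₂_approx : ∀ x y, x₀ ≤ x → y₀ ≤ y →
      |u₂ x y - (g x y + ∫ s in x₀..x, ∫ η in x₀..s, ∫ τ in y₀..y,
        K x y η τ (u₂ η τ))| ≤ ε₂) :
    ∀ x y, x₀ ≤ x → y₀ ≤ y →
      |u₁ x y - u₂ x y| ≤ (ε₁ + ε₂) *
        (1 + q x y * (∫ s in x₀..x, ∫ η in x₀..s, ∫ τ in y₀..y, r η τ) *
          Real.exp (∫ s in x₀..x, ∫ η in x₀..s, ∫ τ in y₀..y, r η τ * q η τ)) := by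
  have hdiff : ∀ a b, x₀ ≤ a → y₀ ≤ b → |u₁ a b - u₂ a b| ≤ ε₁ + ε₂ +
      q a b * tripleIntegral x₀ y₀ (fun η τ => r η τ * |u₁ η τ - u₂ η τ|) a b := by
    intro a b ha hb
    have hI := abs_le.1 <| abs_tripleIntegral_sub_le_of_lipschitz (k := K a b)
      (hK_cont.comp (f := fun z : ℝ × ℝ × ℝ => (a, b, z)) (by fun_prop)
        fun _ hz => ⟨mem_Ici.2 ha, mem_Ici.2 hb, hz⟩) hr_cont hu₁_cont hu₂_cont
      (fun η τ hη hτ => hK_lip a b η τ ha hb hη hτ) ha hb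
    simp only [tripleIntegral, rectIntegral] at hI ⊢
    have h₁ := abs_le.1 (hu₁_approx a b ha hb)
    have h₂ := abs_le.1 (hu₂_approx a b ha hb)
    exact abs_le.2 ⟨by linarith, by linarith⟩
  exact fun x y hx hy => le_mul_exp_of_le_add_mul_tripleIntegral_of_continuousOn hq_cont hr_cont
    (hu₁_cont.sub hu₂_cont).abs hq_nonneg hr_nonneg (fun _ _ _ _ => abs_nonneg _) hdiff hx hy

/-- Continuous (𝕋₁ = 𝕋₂ = ℝ) case of Theorem 3.2: closeness of two
ε-approximate solutions of the integral equation
u(x,y) = g(x,y) + ∫∫∫ K(x,y,η,τ,u(η,τ)). -/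
theorem stmt_10 (x₀ y₀ : ℝ) (g : ℝ → ℝ → ℝ) (K : ℝ → ℝ → ℝ → ℝ → ℝ → ℝ)
    (q r : ℝ → ℝ → ℝ) (ε₁ ε₂ : ℝ) (u₁ u₂ : ℝ → ℝ → ℝ)
    (hg_cont : ContinuousOn (fun z : ℝ × ℝ => g z.1 z.2) (Set.Ici x₀ ×ˢ Set.Ici y₀))
    (hK_cont : ContinuousOn
      (fun z : ℝ × ℝ × ℝ × ℝ × ℝ => K z.1 z.2.1 z.2.2.1 z.2.2.2.1 z.2.2.2.2)
      (Set.Ici x₀ ×ˢ Set.Ici y₀ ×ˢ Set.Ici x₀ ×ˢ Set.Ici y₀ ×ˢ (Set.univ : Set ℝ)))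
    (hq_cont : ContinuousOn (fun z : ℝ × ℝ => q z.1 z.2) (Set.Ici x₀ ×ˢ Set.Ici y₀))
    (hr_cont : ContinuousOn (fun z : ℝ × ℝ => r z.1 z.2) (Set.Ici x₀ ×ˢ Set.Ici y₀))
    (hq_nonneg : ∀ x y, x₀ ≤ x → y₀ ≤ y → 0 ≤ q x y)
    (hr_nonneg : ∀ x y, x₀ ≤ x → y₀ ≤ y → 0 ≤ r x y)
    (hK_lip : ∀ x y η τ, x₀ ≤ x → y₀ ≤ y → x₀ ≤ η → y₀ ≤ τ → ∀ a b : ℝ,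
      |K x y η τ a - K x y η τ b| ≤ q x y * r η τ * |a - b|)
    (hε₁ : 0 ≤ ε₁) (hε₂ : 0 ≤ ε₂)
    (hu₁_cont : ContinuousOn (fun z : ℝ × ℝ => u₁ z.1 z.2) (Set.Ici x₀ ×ˢ Set.Ici y₀))
    (hu₂_cont : ContinuousOn (fun z : ℝ × ℝ => u₂ z.1 z.2) (Set.Ici x₀ ×ˢ Set.Ici y₀))
    (hu₁_approx : ∀ x y, x₀ ≤ x → y₀ ≤ y →
      |u₁ x y - (g x y + ∫ s in x₀..x, ∫ η in x₀..s, ∫ τ in y₀..y,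
        K x y η τ (u₁ η τ))| ≤ ε₁)
    (hu₂_approx : ∀ x y, x₀ ≤ x → y₀ ≤ y →
      |u₂ x y - (g x y + ∫ s in x₀..x, ∫ η in x₀..s, ∫ τ in y₀..y,
        K x y η τ (u₂ η τ))| ≤ ε₂) :
    ∀ x y, x₀ ≤ x → y₀ ≤ y →
      |u₁ x y - u₂ x y| ≤ (ε₁ + ε₂) *
        (1 + q x y * (∫ s in x₀..x, ∫ η in x₀..s, ∫ τ in y₀..y, r η τ) *
          Real.exp (∫ s in x₀..x, ∫ η in x₀..s, ∫ τ in y₀..y, r η τ * q η τ)) :=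
  stmt_10_general x₀ y₀ g K q r ε₁ ε₂ u₁ u₂ hK_cont hq_cont hr_cont hq_nonneg hr_nonneg hK_lip
    hu₁_cont hu₂_cont hu₁_approx hu₂_approx
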